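/- arXiv:2502.04442 — 2 statements merged into one kernel-verified Lean document; each statement's English description precedes it below -/
import Mathlib

section
/- For any density matrix ρ on an N-dimensional Hilbert space, any unitary U, any partition of unity X, and any time t, the cumulative AFL entropy satisfies H_AFL(ρ, U, X, t) ≤ S(ρ) + log N ≤ 2 log N, where S denotes von Neumann entropy. -/
open scoped BigOperators ComplexOrder
open Matrix Kronecker

namespace AFL

variable {n : Type*} [Fintype n] [DecidableEq n]

/-- von Neumann entropy of a (Hermitian) matrix, via its eigenvalues. -/
noncomputable def vNEntropy (ρ : Matrix n n ℂ) : ℝ :=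
  if h : ρ.IsHermitian then -∑ i, h.eigenvalues i * Real.log (h.eigenvalues i) else 0

/-- A density matrix: positive semidefinite (hence Hermitian) with unit trace. -/
def IsDensity (ρ : Matrix n n ℂ) : Prop := ρ.PosSemidef ∧ ρ.trace = 1

/-- An operational partition of unity (Kraus operators of a channel). -/
def IsPartition {K : Type*} [Fintype K] (X : K → Matrix n n ℂ) : Prop :=
  ∑ i, (X i)ᴴ * X i = 1

/-- The entropy-exchange (environment) state ρ̃[X]_{ij} = Tr(Xⁱ ρ Xʲ†). -/
noncomputable def envState {K : Type*} [Fintype K] (X : K → Matrix n n ℂ)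
    (ρ : Matrix n n ℂ) : Matrix K K ℂ :=
  Matrix.of fun i j => (X i * ρ * (X j)ᴴ).trace

/-- Multitime Kraus operator U X^{i_t} ⋯ U X^{i_1} of the t-step evolved partition (UX)^t. -/
noncomputable def multiKraus {K : Type*} (U : Matrix n n ℂ) (X : K → Matrix n n ℂ)
    (t : ℕ) (idx : Fin t → K) : Matrix n n ℂ :=
  (List.ofFn fun k => U * X (idx k)).prod

/-- Cumulative AFL entropy: von Neumann entropy of the environment state after t steps. -/
noncomputable def HAFL {K : Type*} [Fintype K] [DecidableEq K]
    (ρ U : Matrix n n ℂ) (X : K → Matrix n n ℂ) (t : ℕ) : ℝ :=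
  vNEntropy (envState (multiKraus U X t) ρ)

/-- Shannon entropy of a probability vector. -/
noncomputable def shannon {ι : Type*} [Fintype ι] (p : ι → ℝ) : ℝ :=
  -∑ i, p i * Real.log (p i)

end AFL

/-!
Diagonalise `ρ = V diag(p) Vᴴ` and put `R = V diag(√p)`, so that `R Rᴴ = ρ`. With the vectorised
operators `Yⁱ R` as the columns of `M`, the environment state `Tr(Yⁱ ρ Yʲᴴ)` is `Mᴴ M`, the
complement of the system–purifier state `σ = M Mᴴ`. The entropy of `Mᴴ M` is at most the Shannon
entropy of the diagonal of `M Mᴴ`: apply Jensen's inequality to the doubly substochastic matrix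
`|(M W)_{αk}|² / r_k`, where `W` diagonalises `Mᴴ M` with eigenvalues `r`. That diagonal is the
joint distribution `p_a q(b|a)`, and `q(·|a)` is a probability vector because `∑ Yⁱᴴ Yⁱ = 1`, a
property `(UX)^t` inherits from `X`. Hence its entropy is
`S(ρ) + ∑ p_a H(q(·|a)) ≤ S(ρ) + log N`; finally `S(ρ) ≤ log N`.
-/

open Real
open Complex (normSq)

namespace Real

variable {ι κ : Type*} [Fintype ι] [Fintype κ]

theorem sum_mul_negMulLog_le_negMulLog_sum {w x : ι → ℝ} (hw : ∀ i, 0 ≤ w i)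
    (hw1 : ∑ i, w i ≤ 1) (hx : ∀ i, 0 ≤ x i) :
    ∑ i, w i * negMulLog (x i) ≤ negMulLog (∑ i, w i * x i) := by
  -- put the missing mass `1 - ∑ w` on the point `0`, where `negMulLog` vanishes
  let w' : Option ι → ℝ := fun o => o.elim (1 - ∑ i, w i) w
  let x' : Option ι → ℝ := fun o => o.elim 0 x
  have hw' : ∀ o ∈ Finset.univ, 0 ≤ w' o := by
    rintro (_ | i) _
    · simpa [w'] using hw1
    · exact hw i
  have hw'1 : ∑ o, w' o = 1 := by simp [w', Fintype.sum_option]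
  have hx' : ∀ o ∈ Finset.univ, x' o ∈ Set.Ici (0 : ℝ) := by
    rintro (_ | i) _
    · simp [x']
    · exact hx i
  simpa [Fintype.sum_option, w', x'] using concaveOn_negMulLog.le_map_sum hw' hw'1 hx'

theorem sum_negMulLog_le_log_card {w : ι → ℝ} (hw : ∀ i, 0 ≤ w i) (hw1 : ∑ i, w i = 1) :
    ∑ i, negMulLog (w i) ≤ log (Fintype.card ι) := by
  have hN : (0 : ℝ) < Fintype.card ι := by
    have : Nonempty ι := by
      by_contra h
      simp [not_nonempty_iff.mp h] at hw1
    positivity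
  have h := sum_mul_negMulLog_le_negMulLog_sum (w := fun _ => (Fintype.card ι : ℝ)⁻¹)
    (fun _ => by positivity) (by simp [hN.ne']) hw
  rw [← Finset.mul_sum, ← Finset.mul_sum, hw1, mul_one] at h
  rw [negMulLog, log_inv] at h
  nlinarith [inv_pos.mpr hN, mul_inv_cancel₀ hN.ne']

theorem sum_sum_negMulLog_mul_le {p : ι → ℝ} {q : ι → κ → ℝ} (hp : ∀ a, 0 ≤ p a)
    (hq : ∀ a b, 0 ≤ q a b) (hq1 : ∀ a, ∑ b, q a b = 1) :
    ∑ a, ∑ b, negMulLog (p a * q a b)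
      ≤ ∑ a, negMulLog (p a) + (∑ a, p a) * log (Fintype.card κ) := by
  have chain : ∀ a,
      ∑ b, negMulLog (p a * q a b) = negMulLog (p a) + p a * ∑ b, negMulLog (q a b) := by
    intro a
    simp only [negMulLog_mul, Finset.sum_add_distrib, ← Finset.sum_mul, ← Finset.mul_sum, hq1,
      one_mul]
  simp only [chain, Finset.sum_add_distrib, Finset.sum_mul]
  gcongr with a
  · exact hp a
  · exact sum_negMulLog_le_log_card (hq a) (hq1 a)

end Real

namespace Matrix

variable {m ι : Type*}

theorem ofReal_sum_normSq_row [Fintype ι] (M : Matrix m ι ℂ) (α : m) :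
    ((∑ i, normSq (M α i) : ℝ) : ℂ) = (M * Mᴴ) α α := by
  simp [mul_apply, Complex.mul_conj]

theorem ofReal_sum_normSq_col [Fintype m] (M : Matrix m ι ℂ) (k : ι) :
    ((∑ α, normSq (M α k) : ℝ) : ℂ) = (Mᴴ * M) k k := by
  simp [mul_apply, Complex.conj_mul', Complex.normSq_eq_norm_sq]

theorem re_apply_self_le_one_of_mul_self [Fintype ι] {P : Matrix ι ι ℂ} (hP : P.IsHermitian)
    (hPP : P * P = P) (α : ι) : (P α α).re ≤ 1 := by
  -- `P α α = ∑ β, |P α β|²` is real and dominates `|P α α|²`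
  have hdiag : P α α = ((∑ β, normSq (P α β) : ℝ) : ℂ) := by
    rw [ofReal_sum_normSq_row, hP.eq, hPP]
  set s := ∑ β, normSq (P α β)
  have hs : normSq (P α α) ≤ s :=
    Finset.single_le_sum (fun β _ => Complex.normSq_nonneg _) (Finset.mem_univ α)
  rw [hdiag, Complex.normSq_ofReal] at hs
  rw [hdiag, Complex.ofReal_re]
  nlinarith [Finset.sum_nonneg fun β (_ : β ∈ Finset.univ) => Complex.normSq_nonneg (P α β)]

variable [Fintype m] [Fintype ι] [DecidableEq ι]

theorem sum_normSq_div_le_one_of_conjTranspose_mul_self_eq_diagonal {B : Matrix m ι ℂ}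
    {r : ι → ℝ} (hB : Bᴴ * B = diagonal fun k => (r k : ℂ)) (α : m) :
    ∑ k, normSq (B α k) / r k ≤ 1 := by
  -- `B diag(r⁻¹) Bᴴ` is an orthogonal projection, since `r⁻¹ r r⁻¹ = r⁻¹` also when `r = 0`
  let D : Matrix ι ι ℂ := diagonal fun k => ((r k)⁻¹ : ℂ)
  have hD : D * (diagonal fun k => (r k : ℂ)) * D = D := by
    simp only [D, diagonal_mul_diagonal]
    congr 1
    funext k
    simpa using mul_inv_mul_cancel ((r k : ℂ)⁻¹)
  have hP : (B * D * Bᴴ).IsHermitian := by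
    simp [IsHermitian, D, conjTranspose_mul, Matrix.mul_assoc, diagonal_conjTranspose,
      Pi.star_def]
  have hPP : B * D * Bᴴ * (B * D * Bᴴ) = B * D * Bᴴ := by
    calc B * D * Bᴴ * (B * D * Bᴴ) = B * (D * (Bᴴ * B) * D) * Bᴴ := by
          simp only [Matrix.mul_assoc]
      _ = B * D * Bᴴ := by rw [hB, hD, Matrix.mul_assoc]
  have hdiag : (B * D * Bᴴ) α α = ((∑ k, normSq (B α k) / r k : ℝ) : ℂ) := by
    rw [mul_apply]
    simp only [D, mul_diagonal, conjTranspose_apply, Complex.star_def]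
    push_cast
    refine Finset.sum_congr rfl fun k _ => ?_
    rw [mul_right_comm, Complex.mul_conj, div_eq_mul_inv]
  simpa [hdiag] using re_apply_self_le_one_of_mul_self hP hPP α

theorem sum_negMulLog_le_of_conjTranspose_mul_self_eq_diagonal {B : Matrix m ι ℂ}
    {r : ι → ℝ} (hB : Bᴴ * B = diagonal fun k => (r k : ℂ)) :
    ∑ k, negMulLog (r k) ≤ ∑ α, negMulLog (∑ k, normSq (B α k)) := by
  have hcol : ∀ k, ∑ α, normSq (B α k) = r k := fun k => by
    have := ofReal_sum_normSq_col B k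
    rw [hB, diagonal_apply_eq] at this
    exact_mod_cast this
  have hr : ∀ k, 0 ≤ r k := fun k =>
    hcol k ▸ Finset.sum_nonneg fun α _ => Complex.normSq_nonneg _
  -- the weights `|B α k|² / r k` form a doubly substochastic matrix carrying `r` to the row norms
  let w : m → ι → ℝ := fun α k => normSq (B α k) / r k
  have hw : ∀ α k, 0 ≤ w α k := fun α k => div_nonneg (Complex.normSq_nonneg _) (hr k)
  have hw_col : ∀ k, (∑ α, w α k) * negMulLog (r k) = negMulLog (r k) := fun k => by
    rcases eq_or_ne (r k) 0 with hk | hk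
    · simp [hk]
    · rw [← Finset.sum_div, hcol k, div_self hk, one_mul]
  have hw_mul : ∀ α k, w α k * r k = normSq (B α k) := fun α k => by
    rcases eq_or_ne (r k) 0 with hk | hk
    · rw [hk, mul_zero, eq_comm]
      exact (Finset.sum_eq_zero_iff_of_nonneg fun β _ => Complex.normSq_nonneg (B β k)).mp
        (hcol k ▸ hk) α (Finset.mem_univ α)
    · exact div_mul_cancel₀ _ hk
  calc ∑ k, negMulLog (r k) = ∑ α, ∑ k, w α k * negMulLog (r k) := by
        simp only [Finset.sum_comm (γ := m), ← Finset.sum_mul, hw_col]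
    _ ≤ ∑ α, negMulLog (∑ k, w α k * r k) := Finset.sum_le_sum fun α _ =>
        sum_mul_negMulLog_le_negMulLog_sum (hw α)
          (sum_normSq_div_le_one_of_conjTranspose_mul_self_eq_diagonal hB α) hr
    _ = ∑ α, negMulLog (∑ k, normSq (B α k)) := by simp only [hw_mul]

theorem PosSemidef.eigenvectorUnitary_mul_diagonal_sqrt_mul_conjTranspose_self {n : Type*}
    [Fintype n] [DecidableEq n] {A : Matrix n n ℂ} (hA : A.PosSemidef) :
    ((hA.isHermitian.eigenvectorUnitary : Matrix n n ℂ) *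
        diagonal fun i => (√(hA.isHermitian.eigenvalues i) : ℂ)) *
      ((hA.isHermitian.eigenvectorUnitary : Matrix n n ℂ) *
        diagonal fun i => (√(hA.isHermitian.eigenvalues i) : ℂ))ᴴ = A := by
  have hsqrt : (diagonal fun i => (√(hA.isHermitian.eigenvalues i) : ℂ)) *
      (diagonal fun i => (√(hA.isHermitian.eigenvalues i) : ℂ))ᴴ
        = diagonal fun i => (hA.isHermitian.eigenvalues i : ℂ) := by
    rw [diagonal_conjTranspose, diagonal_mul_diagonal]
    congr 1
    funext i
    simp [← Complex.ofReal_mul, Real.mul_self_sqrt (hA.eigenvalues_nonneg i)]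
  conv_rhs => rw [hA.isHermitian.spectral_theorem, Unitary.conjStarAlgAut_apply]
  rw [conjTranspose_mul, Matrix.mul_assoc, ← Matrix.mul_assoc (diagonal _), hsqrt]
  simp [star_eq_conjTranspose, Function.comp_def, Matrix.mul_assoc]

end Matrix

namespace AFL

variable {n ι K L : Type*} [Fintype n]

section Entropy

variable [DecidableEq n]

theorem vNEntropy_eq_sum_negMulLog {A : Matrix n n ℂ} (hA : A.IsHermitian) :
    vNEntropy A = ∑ i, negMulLog (hA.eigenvalues i) := by
  simp [vNEntropy, hA, negMulLog, Finset.sum_neg_distrib]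

theorem IsDensity.sum_eigenvalues {ρ : Matrix n n ℂ} (hρ : IsDensity ρ) :
    ∑ i, hρ.1.isHermitian.eigenvalues i = 1 := by
  have h := hρ.1.isHermitian.trace_eq_sum_eigenvalues.symm.trans hρ.2
  exact_mod_cast (by simpa using h : ((∑ i, hρ.1.isHermitian.eigenvalues i : ℝ) : ℂ) = 1)

theorem vNEntropy_le_log_card {ρ : Matrix n n ℂ} (hρ : IsDensity ρ) :
    vNEntropy ρ ≤ log (Fintype.card n) := by
  rw [vNEntropy_eq_sum_negMulLog hρ.1.isHermitian]
  exact sum_negMulLog_le_log_card hρ.1.eigenvalues_nonneg hρ.sum_eigenvalues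

theorem vNEntropy_conjTranspose_mul_self_le {m : Type*} [Fintype m] (M : Matrix m n ℂ) :
    vNEntropy (Mᴴ * M) ≤ ∑ α, negMulLog (∑ i, normSq (M α i)) := by
  have hA := isHermitian_conjTranspose_mul_self M
  let W : Matrix n n ℂ := hA.eigenvectorUnitary
  have hWW : W * Wᴴ = 1 := mem_unitaryGroup_iff.mp hA.eigenvectorUnitary.2
  have hB : (M * W)ᴴ * (M * W) = diagonal fun k => (hA.eigenvalues k : ℂ) := by
    have h := hA.conjStarAlgAut_star_eigenvectorUnitary
    rw [Unitary.conjStarAlgAut_star_apply] at h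
    simpa [W, conjTranspose_mul, Matrix.mul_assoc, star_eq_conjTranspose, Function.comp_def]
      using h
  have hrow : ∀ α, ∑ k, normSq ((M * W) α k) = ∑ i, normSq (M α i) := fun α => by
    have h : M * W * (M * W)ᴴ = M * Mᴴ := by
      rw [conjTranspose_mul, Matrix.mul_assoc, ← Matrix.mul_assoc W, hWW, Matrix.one_mul]
    exact_mod_cast (ofReal_sum_normSq_row _ α).trans (h ▸ (ofReal_sum_normSq_row M α).symm)
  rw [vNEntropy_eq_sum_negMulLog hA]
  simpa only [hrow] using sum_negMulLog_le_of_conjTranspose_mul_self_eq_diagonal hB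

end Entropy

section Partition

variable [DecidableEq n] {X : K → Matrix n n ℂ}

theorem IsPartition.comp_equiv [Fintype K] [Fintype L] (hX : IsPartition X) (e : L ≃ K) :
    IsPartition (X ∘ e) :=
  (e.sum_comp fun k => (X k)ᴴ * X k).trans hX

theorem IsPartition.mul [Fintype K] [Fintype L] {Y : L → Matrix n n ℂ} (hX : IsPartition X)
    (hY : IsPartition Y) : IsPartition fun kl : K × L => X kl.1 * Y kl.2 := by
  calc ∑ kl : K × L, (X kl.1 * Y kl.2)ᴴ * (X kl.1 * Y kl.2)
      = ∑ l, (Y l)ᴴ * (∑ k, (X k)ᴴ * X k) * Y l := by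
        rw [Fintype.sum_prod_type, Finset.sum_comm]
        simp only [Finset.mul_sum, Finset.sum_mul, conjTranspose_mul, Matrix.mul_assoc]
    _ = 1 := by rw [hX]; simp only [Matrix.mul_one]; exact hY

theorem IsPartition.unitary_mul [Fintype K] (hX : IsPartition X) {U : Matrix n n ℂ}
    (hU : U ∈ unitaryGroup n ℂ) : IsPartition fun k => U * X k := by
  have hUU : Uᴴ * U = 1 := mem_unitaryGroup_iff'.mp hU
  simpa only [IsPartition, conjTranspose_mul, Matrix.mul_assoc, ← Matrix.mul_assoc Uᴴ, hUU,
    Matrix.one_mul] using hX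

theorem IsPartition.mul_unitary [Fintype K] (hX : IsPartition X) {V : Matrix n n ℂ}
    (hV : V ∈ unitaryGroup n ℂ) : IsPartition fun k => X k * V := by
  have hVV : Vᴴ * V = 1 := mem_unitaryGroup_iff'.mp hV
  calc ∑ k, (X k * V)ᴴ * (X k * V) = Vᴴ * (∑ k, (X k)ᴴ * X k) * V := by
        simp only [Finset.mul_sum, Finset.sum_mul, conjTranspose_mul, Matrix.mul_assoc]
    _ = 1 := by rw [hX, Matrix.mul_one, hVV]

theorem IsPartition.sum_sum_normSq [Fintype K] (hX : IsPartition X) (a : n) :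
    ∑ k, ∑ b, normSq (X k b a) = 1 := by
  have h := congrFun (congrFun hX a) a
  rw [Matrix.sum_apply, one_apply_eq] at h
  simp only [← ofReal_sum_normSq_col] at h
  exact_mod_cast h

theorem multiKraus_succ_apply (U : Matrix n n ℂ) (X : K → Matrix n n ℂ) (t : ℕ)
    (idx : Fin (t + 1) → K) :
    multiKraus U X (t + 1) idx = U * X (idx 0) * multiKraus U X t (Fin.tail idx) := by
  simp [multiKraus, List.ofFn_succ, Fin.tail]

theorem isPartition_multiKraus [Fintype K] {U : Matrix n n ℂ} (hU : U ∈ unitaryGroup n ℂ)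
    (hX : IsPartition X) (t : ℕ) : IsPartition (multiKraus U X t) := by
  induction t with
  | zero => simp [IsPartition, multiKraus]
  | succ t ih =>
    have h : multiKraus U X (t + 1) = (fun kf : K × (Fin t → K) =>
        U * X kf.1 * multiKraus U X t kf.2) ∘ (Fin.consEquiv fun _ => K).symm :=
      funext (multiKraus_succ_apply U X t)
    rw [h]
    exact ((hX.unitary_mul hU).mul ih).comp_equiv _

end Partition

section Purification

variable [Fintype ι]

/-- For `R * Rᴴ = ρ` this `M` encodes the paper's system–purifier state: `M * Mᴴ` is the complex
conjugate of `σ[Y]`, and `Mᴴ * M` is the environment state. -/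
def purificationMatrix (Y : ι → Matrix n n ℂ) (R : Matrix n n ℂ) : Matrix (n × n) ι ℂ :=
  of fun ba i => star ((Y i * R) ba.1 ba.2)

theorem envState_eq_conjTranspose_mul_self (Y : ι → Matrix n n ℂ) {ρ R : Matrix n n ℂ}
    (hR : R * Rᴴ = ρ) :
    envState Y ρ = (purificationMatrix Y R)ᴴ * purificationMatrix Y R := by
  ext i j
  have h : Y i * ρ * (Y j)ᴴ = Y i * R * (Y j * R)ᴴ := by
    rw [conjTranspose_mul, ← hR]
    simp only [Matrix.mul_assoc]
  rw [mul_apply]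
  simp only [envState, purificationMatrix, conjTranspose_apply, of_apply, star_star, h]
  generalize Y i * R = A, Y j * R = B
  simp [trace, mul_apply, Fintype.sum_prod_type]

theorem sum_normSq_purificationMatrix_mul_diagonal_sqrt [DecidableEq n] (Y : ι → Matrix n n ℂ)
    (V : Matrix n n ℂ) {p : n → ℝ} {a : n} (ha : 0 ≤ p a) (b : n) :
    ∑ i, normSq (purificationMatrix Y (V * diagonal fun a => (√(p a) : ℂ)) (b, a) i)
      = p a * ∑ i, normSq ((Y i * V) b a) := by
  simp only [purificationMatrix, of_apply, Complex.star_def, Complex.normSq_conj,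
    ← Matrix.mul_assoc, mul_diagonal, Complex.normSq_mul, Complex.normSq_ofReal,
    Real.mul_self_sqrt ha, Finset.mul_sum, mul_comm]

theorem vNEntropy_envState_le [DecidableEq n] [DecidableEq ι] {ρ : Matrix n n ℂ}
    (hρ : IsDensity ρ) {Y : ι → Matrix n n ℂ} (hY : IsPartition Y) :
    vNEntropy (envState Y ρ) ≤ vNEntropy ρ + log (Fintype.card n) := by
  have hH := hρ.1.isHermitian
  set p := hH.eigenvalues
  have hp : ∀ a, 0 ≤ p a := hρ.1.eigenvalues_nonneg
  let V : Matrix n n ℂ := hH.eigenvectorUnitary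
  let R := V * diagonal fun a => (√(p a) : ℂ)
  let q : n → n → ℝ := fun a b => ∑ i, normSq ((Y i * V) b a)
  have hq1 : ∀ a, ∑ b, q a b = 1 := fun a => by
    rw [Finset.sum_comm]
    exact (hY.mul_unitary hH.eigenvectorUnitary.2).sum_sum_normSq a
  calc vNEntropy (envState Y ρ)
      ≤ ∑ ba, negMulLog (∑ i, normSq (purificationMatrix Y R ba i)) :=
        envState_eq_conjTranspose_mul_self Y
            hρ.1.eigenvectorUnitary_mul_diagonal_sqrt_mul_conjTranspose_self ▸
          vNEntropy_conjTranspose_mul_self_le _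
    _ = ∑ a, ∑ b, negMulLog (p a * q a b) := by
        simp only [Fintype.sum_prod_type, R,
          sum_normSq_purificationMatrix_mul_diagonal_sqrt Y V (hp _)]
        exact Finset.sum_comm
    _ ≤ ∑ a, negMulLog (p a) + (∑ a, p a) * log (Fintype.card n) :=
        sum_sum_negMulLog_mul_le hp
          (fun a b => Finset.sum_nonneg fun i _ => Complex.normSq_nonneg _) hq1
    _ = vNEntropy ρ + log (Fintype.card n) := by
        rw [hρ.sum_eigenvalues, one_mul, vNEntropy_eq_sum_negMulLog hH]

end Purification

end AFL

/-- H_AFL(ρ,U,X,t) ≤ S(ρ) + log N ≤ 2 log N (system-purifier bound). -/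
theorem stmt4 {n K : Type*} [Fintype n] [DecidableEq n] [Fintype K] [DecidableEq K]
    (ρ : Matrix n n ℂ) (hρ : AFL.IsDensity ρ)
    (U : Matrix n n ℂ) (hU : U ∈ Matrix.unitaryGroup n ℂ)
    (X : K → Matrix n n ℂ) (hX : AFL.IsPartition X) (t : ℕ) :
    AFL.HAFL ρ U X t ≤ AFL.vNEntropy ρ + Real.log (Fintype.card n) ∧
    AFL.vNEntropy ρ + Real.log (Fintype.card n) ≤ 2 * Real.log (Fintype.card n) := by
  have hS := AFL.vNEntropy_le_log_card hρ
  exact ⟨AFL.vNEntropy_envState_le hρ (AFL.isPartition_multiKraus hU hX t), by linarith⟩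
end

section
/- Theorem 2, unitary-factor case: If ρ = ∑_ν q^ν ρ_A^ν ⊗ ρ_B^ν, U = U_A ⊗ U_B, the partition on B is a single unitary Kraus operator, and X = X_A ⊗ X_B, then H_AFL(ρ, U, X, t) = H_AFL(ρ_A, U_A, X_A, t) where ρ_A = ∑_ν q^ν ρ_A^ν = Tr_B(ρ). -/
open scoped BigOperators ComplexOrder
open Matrix Kronecker

lemma kron_conjTranspose {nA nB : Type*} (A : Matrix nA nA ℂ) (B : Matrix nB nB ℂ) :
    (A ⊗ₖ B)ᴴ = Aᴴ ⊗ₖ Bᴴ := by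
  ext ⟨i, j⟩ ⟨k, l⟩
  simp [Matrix.conjTranspose_apply, Matrix.kroneckerMap_apply, mul_comm]

lemma prod_ofFn_kron {nA nB : Type*} [Fintype nA] [DecidableEq nA] [Fintype nB] [DecidableEq nB]
    (t : ℕ) (f : Fin t → Matrix nA nA ℂ) (g : Fin t → Matrix nB nB ℂ) :
    (List.ofFn fun k => f k ⊗ₖ g k).prod =
      (List.ofFn f).prod ⊗ₖ (List.ofFn g).prod := by
  induction t with
  | zero => simp [Matrix.one_kronecker_one]
  | succ t ih =>
      simp only [List.ofFn_succ, List.prod_cons, ih, Matrix.mul_kronecker_mul]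

/-- Theorem 2, unitary-factor case: if the partition on B is a single
unitary Kraus operator V, then H_AFL(ρ,U,X,t) = H_AFL(ρ_A,U_A,X_A,t) for the reduced
state ρ_A = ∑_ν q_ν ρ_A^ν = Tr_B ρ. -/
theorem stmt14 {nA nB : Type*} [Fintype nA] [DecidableEq nA] [Fintype nB] [DecidableEq nB]
    {KA W : Type*} [Fintype KA] [DecidableEq KA] [Fintype W]
    (q : W → ℝ) (hq : ∀ v, 0 ≤ q v) (hq1 : ∑ v, q v = 1)
    (ρA : W → Matrix nA nA ℂ) (ρB : W → Matrix nB nB ℂ)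
    (hρA : ∀ v, AFL.IsDensity (ρA v)) (hρB : ∀ v, AFL.IsDensity (ρB v))
    (UA : Matrix nA nA ℂ) (UB : Matrix nB nB ℂ)
    (hUA : UA ∈ Matrix.unitaryGroup nA ℂ) (hUB : UB ∈ Matrix.unitaryGroup nB ℂ)
    (XA : KA → Matrix nA nA ℂ) (hXA : AFL.IsPartition XA)
    (V : Matrix nB nB ℂ) (hV : V ∈ Matrix.unitaryGroup nB ℂ)
    (t : ℕ) :
    AFL.HAFL (∑ v, (q v : ℂ) • (ρA v ⊗ₖ ρB v)) (UA ⊗ₖ UB)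
        (fun i : KA => XA i ⊗ₖ V) t =
      AFL.HAFL (∑ v, (q v : ℂ) • ρA v) UA XA t := by
  classical
  have hW : (UB * V) ∈ Matrix.unitaryGroup nB ℂ := mul_mem hUB hV
  set Wt : Matrix nB nB ℂ := (UB * V) ^ t with hWt
  have hWmem : Wt ∈ Matrix.unitaryGroup nB ℂ := pow_mem hW t
  have hWunit : Wtᴴ * Wt = 1 := by
    simpa [Matrix.star_eq_conjTranspose] using hWmem.1
  -- multiKraus factorizes
  have hfact : ∀ idx : Fin t → KA,
      AFL.multiKraus (UA ⊗ₖ UB) (fun i : KA => XA i ⊗ₖ V) t idx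
        = AFL.multiKraus UA XA t idx ⊗ₖ Wt := by
    intro idx
    unfold AFL.multiKraus
    have : (fun k : Fin t => (UA ⊗ₖ UB) * (XA (idx k) ⊗ₖ V))
        = fun k : Fin t => (UA * XA (idx k)) ⊗ₖ (UB * V) := by
      funext k; rw [← Matrix.mul_kronecker_mul]
    rw [this, prod_ofFn_kron]
    congr 1
    simp [hWt, List.ofFn_const, pow_succ]
  -- environment states coincide
  have henv : AFL.envState (AFL.multiKraus (UA ⊗ₖ UB) (fun i : KA => XA i ⊗ₖ V) t)
        (∑ v, (q v : ℂ) • (ρA v ⊗ₖ ρB v))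
      = AFL.envState (AFL.multiKraus UA XA t) (∑ v, (q v : ℂ) • ρA v) := by
    ext idx jdx
    simp only [AFL.envState, Matrix.of_apply, hfact]
    rw [Finset.mul_sum, Finset.sum_mul, Finset.mul_sum, Finset.sum_mul]
    simp only [Matrix.trace_sum, Matrix.mul_smul, Matrix.smul_mul, Matrix.trace_smul]
    refine Finset.sum_congr rfl fun v _ => ?_
    rw [kron_conjTranspose, ← Matrix.mul_kronecker_mul, ← Matrix.mul_kronecker_mul,
      Matrix.trace_kronecker]
    have htrB : (Wt * ρB v * Wtᴴ).trace = 1 := by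
      rw [Matrix.trace_mul_cycle, hWunit, Matrix.one_mul, (hρB v).2]
    rw [htrB, mul_one]
  unfold AFL.HAFL
  rw [henv]
end
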